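/- arXiv:1806.08733 — 5 statements merged into one kernel-verified Lean document; each statement's English description precedes it below -/
import Mathlib

section
/- Blackwell-dominance convex dominance inequality (core of Theorem 2): Let P be an X×X row-stochastic matrix, let B(2) be an X×Y row-stochastic matrix and L a Y×Y' row-stochastic matrix, and set B(1) = B(2)·L (an X×Y' row-stochastic matrix), so B(2) Blackwell-dominates B(1). Assume all entries of B(1) and B(2) are strictly positive. Then for every convex function V : Π(X) → ℝ and every belief π ∈ Π(X): Σ_{y=1}^{Y'} V(T₁(π,y))·σ₁(π,y) ≤ Σ_{y=1}^{Y} V(T₂(π,y))·σ₂(π,y), where σ_a(π,y) = Σ_j B(a)_{j,y}(Pᵀπ)_j and T_a(π,y)_j = B(a)_{j,y}(Pᵀπ)_j / σ_a(π,y) are the Bayes normalization and update under observation matrix B(a) (a ∈ {1,2}). -/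
open Finset

/-- Membership in the belief simplex Π(X). -/
def inSimplex {X : ℕ} (π : Fin X → ℝ) : Prop :=
  (∀ i, 0 ≤ π i) ∧ ∑ i, π i = 1

/-- A matrix is row-stochastic: nonnegative entries, rows summing to one. -/
def rowStochastic {n m : ℕ} (A : Matrix (Fin n) (Fin m) ℝ) : Prop :=
  (∀ i j, 0 ≤ A i j) ∧ ∀ i, ∑ j, A i j = 1

/-- Totally positive of order 2: all 2×2 minors nonnegative. -/
def TP2 {n m : ℕ} (A : Matrix (Fin n) (Fin m) ℝ) : Prop :=
  ∀ i i' : Fin n, ∀ y y' : Fin m, i < i' → y < y' →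
    A i y' * A i' y ≤ A i y * A i' y'

/-- Monotone likelihood ratio (MLR) order: `a ≤_r b`. -/
def MLRle {n : ℕ} (a b : Fin n → ℝ) : Prop :=
  ∀ i j : Fin n, i < j → a j * b i ≤ a i * b j

/-- The last index of `Fin n`. -/
def lastIdx (n : ℕ) [NeZero n] : Fin n :=
  ⟨n - 1, Nat.sub_lt (Nat.pos_of_ne_zero (NeZero.ne n)) Nat.one_pos⟩

/-- One-step predicted belief `Pᵀπ`. -/
noncomputable def bayesPred {X : ℕ} (P : Matrix (Fin X) (Fin X) ℝ) (π : Fin X → ℝ) : Fin X → ℝ :=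
  fun j => ∑ i, P i j * π i

/-- Normalization constant σ(π,y) = Σ_j B_{j,y} (Pᵀπ)_j. -/
noncomputable def obsMarg {X Y : ℕ} (B : Matrix (Fin X) (Fin Y) ℝ)
    (P : Matrix (Fin X) (Fin X) ℝ) (π : Fin X → ℝ) (y : Fin Y) : ℝ :=
  ∑ j, B j y * bayesPred P π j

/-- Bayes belief update T(π,y). -/
noncomputable def bayesT {X Y : ℕ} (B : Matrix (Fin X) (Fin Y) ℝ)
    (P : Matrix (Fin X) (Fin X) ℝ) (π : Fin X → ℝ) (y : Fin Y) : Fin X → ℝ :=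
  fun j => B j y * bayesPred P π j / obsMarg B P π y

/-- Value iteration: `V 0 ≡ 0`, `V (k+1) π = max_u [rᵤᵀπ + ρ Σ_y V k (T(π,y,u)) σ(π,y,u)]`. -/
noncomputable def VI {X Y U : ℕ} [NeZero U]
    (P : Fin U → Matrix (Fin X) (Fin X) ℝ)
    (B : Fin U → Matrix (Fin X) (Fin Y) ℝ)
    (r : Fin U → Fin X → ℝ) (ρ : ℝ) : ℕ → (Fin X → ℝ) → ℝ
  | 0 => fun _ => 0
  | (k+1) => fun π =>
      Finset.univ.sup' Finset.univ_nonempty fun u =>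
        (∑ i, r u i * π i) +
          ρ * ∑ y, VI P B r ρ k (bayesT (B u) (P u) π y) * obsMarg (B u) (P u) π y

/-- `Qfun P B r ρ k π u` is the value-iteration Q-function at horizon `k+1`,
i.e. `Q_{k+1}(π,u) = rᵤᵀπ + ρ Σ_y V_k(T(π,y,u)) σ(π,y,u)`. -/
noncomputable def Qfun {X Y U : ℕ} [NeZero U]
    (P : Fin U → Matrix (Fin X) (Fin X) ℝ)
    (B : Fin U → Matrix (Fin X) (Fin Y) ℝ)
    (r : Fin U → Fin X → ℝ) (ρ : ℝ) (k : ℕ) (π : Fin X → ℝ) (u : Fin U) : ℝ :=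
  (∑ i, r u i * π i) +
    ρ * ∑ y, VI P B r ρ k (bayesT (B u) (P u) π y) * obsMarg (B u) (P u) π y

/-- Lehmann precision of the pair `(A, C)` (i.e. `C >_L A`): for all columns `j, l`,
`g(i) = Σ_{y≤j} A i y − Σ_{y≤l} C i y` changes sign at most once,
from negative to positive, as the row `i` increases. -/
def LehmannPrec {X Y : ℕ} (A C : Matrix (Fin X) (Fin Y) ℝ) : Prop :=
  ∀ j l : Fin Y, ∀ i i' : Fin X, i ≤ i' →
    ((0 ≤ (∑ y ∈ univ.filter (· ≤ j), A i y) - ∑ y ∈ univ.filter (· ≤ l), C i y →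
      0 ≤ (∑ y ∈ univ.filter (· ≤ j), A i' y) - ∑ y ∈ univ.filter (· ≤ l), C i' y) ∧
     (0 < (∑ y ∈ univ.filter (· ≤ j), A i y) - ∑ y ∈ univ.filter (· ≤ l), C i y →
      0 < (∑ y ∈ univ.filter (· ≤ j), A i' y) - ∑ y ∈ univ.filter (· ≤ l), C i' y))

/-- Boundary/absolute-continuity condition (A7) for the pair `(A, C)` (C playing the role of
`B(u+1)`): `A_{i,1} C_{X,1} ≤ C_{i,1} A_{X,1}` and `A_{i,Y} C_{X,Y} ≥ C_{i,Y} A_{X,Y}`. -/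
def BoundaryCond {X Y : ℕ} [NeZero X] [NeZero Y] (A C : Matrix (Fin X) (Fin Y) ℝ) : Prop :=
  ∀ i : Fin X,
    A i 0 * C (lastIdx X) 0 ≤ C i 0 * A (lastIdx X) 0 ∧
    C i (lastIdx Y) * A (lastIdx X) (lastIdx Y) ≤ A i (lastIdx Y) * C (lastIdx X) (lastIdx Y)

/-- Copositive dominance `P1 ⪯ P2`. -/
def CopositiveDom {X : ℕ} (P1 P2 : Matrix (Fin X) (Fin X) ℝ) : Prop :=
  ∀ j j' : Fin X, j'.val = j.val + 1 → ∀ π : Fin X → ℝ, inSimplex π →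
    0 ≤ ∑ m, ∑ n, π m *
      ((1/2) * ((P1 m j * P2 n j' - P1 m j' * P2 n j) +
                (P1 n j * P2 m j' - P1 n j' * P2 m j))) * π n

/-- `u` is the largest maximizer of `f` over the action set. -/
def isLargestArgmax {U : ℕ} (f : Fin U → ℝ) (u : Fin U) : Prop :=
  (∀ v, f v ≤ f u) ∧ ∀ v, f u ≤ f v → v ≤ u

/-!
Write `qᵧ = (B j y · (Pᵀπ)ⱼ)ⱼ` for the unnormalized posterior after observing `y`. Then
`V(T(π,y)) σ(π,y)` is the perspective `(∑ⱼ qⱼ) · V(q / ∑ⱼ qⱼ)` of `V` at `qᵧ`, which is positively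
homogeneous and, by convexity of `V`, subadditive on the nonnegative cone. Garbling by `L`
gives `q¹_{y'} = ∑ᵧ L y y' • q²ᵧ`, so the perspective of `q¹_{y'}` is at most
`∑ᵧ L y y' · perspective(q²ᵧ)`; summing over `y'` and using that the rows of `L` sum to one yields the
inequality.
-/

noncomputable def perspective {ι : Type*} [Fintype ι] (V : (ι → ℝ) → ℝ) (q : ι → ℝ) : ℝ :=
  (∑ j, q j) * V ((∑ j, q j)⁻¹ • q)

section Perspective

variable {ι : Type*} [Fintype ι] {V : (ι → ℝ) → ℝ}

theorem perspective_zero (V : (ι → ℝ) → ℝ) : perspective V 0 = 0 := by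
  simp [perspective]

theorem perspective_smul (V : (ι → ℝ) → ℝ) (c : ℝ) (q : ι → ℝ) :
    perspective V (c • q) = c * perspective V q := by
  rcases eq_or_ne c 0 with rfl | hc
  · simp [perspective]
  have hsum : ∑ j, (c • q) j = c * ∑ j, q j := by simp [Finset.mul_sum]
  have hnorm : (c * ∑ j, q j)⁻¹ • c • q = (∑ j, q j)⁻¹ • q := by
    rw [smul_smul, mul_inv, mul_right_comm, inv_mul_cancel₀ hc, one_mul]
  simp only [perspective, hsum, hnorm, mul_assoc]

theorem inv_sum_smul_mem_stdSimplex {q : ι → ℝ} (hq : 0 ≤ q) (hs : ∑ j, q j ≠ 0) :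
    (∑ j, q j)⁻¹ • q ∈ stdSimplex ℝ ι := by
  refine ⟨fun j => smul_nonneg (inv_nonneg.2 (Fintype.sum_nonneg hq)) (hq j), ?_⟩
  simp [← Finset.mul_sum, inv_mul_cancel₀ hs]

theorem perspective_add_le (hV : ConvexOn ℝ (stdSimplex ℝ ι) V) {q r : ι → ℝ}
    (hq : 0 ≤ q) (hr : 0 ≤ r) : perspective V (q + r) ≤ perspective V q + perspective V r := by
  set a := ∑ j, q j
  set b := ∑ j, r j
  obtain ha0 | ha : 0 = a ∨ 0 < a := (Fintype.sum_nonneg hq).eq_or_lt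
  · simp [(Fintype.sum_eq_zero_iff_of_nonneg hq).1 ha0.symm, perspective_zero]
  obtain hb0 | hb : 0 = b ∨ 0 < b := (Fintype.sum_nonneg hr).eq_or_lt
  · simp [(Fintype.sum_eq_zero_iff_of_nonneg hr).1 hb0.symm, perspective_zero]
  have hab : 0 < a + b := add_pos ha hb
  have hsum : ∑ j, (q + r) j = a + b := by simp [a, b, Finset.sum_add_distrib]
  have hmix : (a + b)⁻¹ • (q + r) = (a / (a + b)) • (a⁻¹ • q) + (b / (a + b)) • (b⁻¹ • r) := by
    rw [smul_add, smul_smul, smul_smul]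
    congr 2 <;> field_simp
  have hjensen := hV.2 (inv_sum_smul_mem_stdSimplex hq ha.ne')
    (inv_sum_smul_mem_stdSimplex hr hb.ne') (div_nonneg ha.le hab.le) (div_nonneg hb.le hab.le)
    (by field_simp)
  rw [← hmix, smul_eq_mul, smul_eq_mul] at hjensen
  calc perspective V (q + r) = (a + b) * V ((a + b)⁻¹ • (q + r)) := by
        rw [perspective, hsum]
    _ ≤ (a + b) * (a / (a + b) * V (a⁻¹ • q) + b / (a + b) * V (b⁻¹ • r)) :=
        mul_le_mul_of_nonneg_left hjensen hab.le
    _ = a * V (a⁻¹ • q) + b * V (b⁻¹ • r) := by field_simp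

theorem perspective_sum_le (hV : ConvexOn ℝ (stdSimplex ℝ ι) V) {κ : Type*} (s : Finset κ)
    (q : κ → ι → ℝ) (hq : ∀ k ∈ s, 0 ≤ q k) :
    perspective V (∑ k ∈ s, q k) ≤ ∑ k ∈ s, perspective V (q k) :=
  Finset.le_sum_of_subadditive_on_pred (perspective V) (0 ≤ ·) (perspective_zero V).le
    (fun _ _ => perspective_add_le hV) (fun _ _ => add_nonneg) q hq

theorem sum_perspective_garbling_le (hV : ConvexOn ℝ (stdSimplex ℝ ι) V)
    {κ κ' : Type*} [Fintype κ] [Fintype κ'] (L : Matrix κ κ' ℝ) (hL0 : ∀ y y', 0 ≤ L y y')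
    (hL1 : ∀ y, ∑ y', L y y' = 1) (q : κ → ι → ℝ) (hq : ∀ y, 0 ≤ q y) :
    ∑ y', perspective V (∑ y, L y y' • q y) ≤ ∑ y, perspective V (q y) :=
  calc ∑ y', perspective V (∑ y, L y y' • q y)
      ≤ ∑ y', ∑ y, perspective V (L y y' • q y) := Finset.sum_le_sum fun y' _ =>
        perspective_sum_le hV _ _ fun y _ => smul_nonneg (hL0 y y') (hq y)
    _ = ∑ y, (∑ y', L y y') * perspective V (q y) := by
        rw [Finset.sum_comm]
        simp only [perspective_smul, Finset.sum_mul]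
    _ = ∑ y, perspective V (q y) := by simp [hL1]

end Perspective

theorem convexOn_stdSimplex_of_combination_le {X : ℕ} {V : (Fin X → ℝ) → ℝ}
    (hV : ∀ ξ η : Fin X → ℝ, inSimplex ξ → inSimplex η → ∀ t : ℝ, 0 ≤ t → t ≤ 1 →
      V (fun i => t * ξ i + (1 - t) * η i) ≤ t * V ξ + (1 - t) * V η) :
    ConvexOn ℝ (stdSimplex ℝ (Fin X)) V := by
  refine ⟨convex_stdSimplex ℝ (Fin X), fun ξ hξ η hη a b ha hb hab => ?_⟩
  obtain rfl : b = 1 - a := by linarith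
  exact hV ξ η hξ hη a ha (by linarith)

section Bayes

variable {X Y : ℕ}

theorem bayesPred_nonneg {P : Matrix (Fin X) (Fin X) ℝ} (hP : ∀ i j, 0 ≤ P i j)
    {π : Fin X → ℝ} (hπ : ∀ i, 0 ≤ π i) : 0 ≤ bayesPred P π :=
  fun j => Finset.sum_nonneg fun i _ => mul_nonneg (hP i j) (hπ i)

theorem sum_V_bayesT_mul_obsMarg (V : (Fin X → ℝ) → ℝ) (B : Matrix (Fin X) (Fin Y) ℝ)
    (P : Matrix (Fin X) (Fin X) ℝ) (π : Fin X → ℝ) :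
    ∑ y, V (bayesT B P π y) * obsMarg B P π y =
      ∑ y, perspective V (fun j => B j y * bayesPred P π j) := by
  refine Finset.sum_congr rfl fun y _ => ?_
  have hT : bayesT B P π y = (obsMarg B P π y)⁻¹ • fun j => B j y * bayesPred P π j := by
    funext j
    simp [bayesT, div_eq_inv_mul]
  rw [hT, mul_comm]
  rfl

theorem mul_apply_mul_eq_sum_smul {Y' : ℕ} (B : Matrix (Fin X) (Fin Y) ℝ)
    (L : Matrix (Fin Y) (Fin Y') ℝ) (d : Fin X → ℝ) (y' : Fin Y') :
    (fun j => (B * L) j y' * d j) = ∑ y, L y y' • fun j => B j y * d j := by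
  funext j
  simp only [Matrix.mul_apply, Finset.sum_mul, Finset.sum_apply, Pi.smul_apply, smul_eq_mul]
  exact Finset.sum_congr rfl fun y _ => by ring

end Bayes

theorem blackwell_convex_dominance_general
    (X Y Y' : ℕ)
    (P : Matrix (Fin X) (Fin X) ℝ) (hP : rowStochastic P)
    (B2 : Matrix (Fin X) (Fin Y) ℝ) (hB2 : rowStochastic B2)
    (L : Matrix (Fin Y) (Fin Y') ℝ) (hL : rowStochastic L)
    (B1 : Matrix (Fin X) (Fin Y') ℝ) (hB1def : B1 = B2 * L)
    (V : (Fin X → ℝ) → ℝ)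
    (hV : ∀ ξ η : Fin X → ℝ, inSimplex ξ → inSimplex η → ∀ t : ℝ, 0 ≤ t → t ≤ 1 →
      V (fun i => t * ξ i + (1 - t) * η i) ≤ t * V ξ + (1 - t) * V η)
    (π : Fin X → ℝ) (hπ : inSimplex π) :
    ∑ y, V (bayesT B1 P π y) * obsMarg B1 P π y ≤
      ∑ y, V (bayesT B2 P π y) * obsMarg B2 P π y := by
  have hpred := bayesPred_nonneg hP.1 hπ.1
  rw [sum_V_bayesT_mul_obsMarg, sum_V_bayesT_mul_obsMarg, hB1def]
  simp only [mul_apply_mul_eq_sum_smul]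
  exact sum_perspective_garbling_le (convexOn_stdSimplex_of_combination_le hV) L hL.1 hL.2 _
    fun y j => mul_nonneg (hB2.1 j y) (hpred j)

/-- Core of Theorem 2 (Blackwell dominance): if `B1 = B2 * L` with `L` row-stochastic
(so `B2` Blackwell-dominates `B1`) and both have strictly positive entries, then for any
convex `V` on the simplex, `Σ_y V(T₁(π,y)) σ₁(π,y) ≤ Σ_y V(T₂(π,y)) σ₂(π,y)`. -/
theorem blackwell_convex_dominance
    (X Y Y' : ℕ)
    (P : Matrix (Fin X) (Fin X) ℝ) (hP : rowStochastic P)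
    (B2 : Matrix (Fin X) (Fin Y) ℝ) (hB2 : rowStochastic B2)
    (L : Matrix (Fin Y) (Fin Y') ℝ) (hL : rowStochastic L)
    (B1 : Matrix (Fin X) (Fin Y') ℝ) (hB1def : B1 = B2 * L)
    (hB1pos : ∀ i y, 0 < B1 i y) (hB2pos : ∀ i y, 0 < B2 i y)
    (V : (Fin X → ℝ) → ℝ)
    (hV : ∀ ξ η : Fin X → ℝ, inSimplex ξ → inSimplex η → ∀ t : ℝ, 0 ≤ t → t ≤ 1 →
      V (fun i => t * ξ i + (1 - t) * η i) ≤ t * V ξ + (1 - t) * V η)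
    (π : Fin X → ℝ) (hπ : inSimplex π) :
    ∑ y, V (bayesT B1 P π y) * obsMarg B1 P π y ≤
      ∑ y, V (bayesT B2 P π y) * obsMarg B2 P π y :=
  blackwell_convex_dominance_general X Y Y' P hP B2 hB2 L hL B1 hB1def V hV π hπ
end

section
/- Blackwell-dominance comparison of optimal rewards of two POMDPs (Theorem 3, statement 2), finite-horizon form: Consider two finite POMDPs θ = (P(1..U), B(1),...,B(U)) and θ̄ = (P(1..U), B̄(1),...,B̄(U)) sharing the same row-stochastic transition matrices P(u), the same reward vectors r_u, and the same discount ρ ∈ [0,1), where all B(u), B̄(u) are row-stochastic with strictly positive entries. Assume Blackwell dominance B(u) >_B B̄(u) for every u: there exist row-stochastic matrices L_u with B̄(u) = B(u)·L_u. Then the value-iteration value functions satisfy V_k^θ(π) ≥ V_k^θ̄(π) for every k ≥ 0 and every π ∈ Π(X). -/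
open Finset

/-! Extend `V_k` from beliefs to the nonnegative cone by `W_k(x) = (∑ x) · V_k(x / ∑ x)`.
On unnormalized beliefs the Bayes update is the linear map `x ↦ diag(B_{·y}) Pᵀ x`, so `W_k`
satisfies a value-iteration recursion without normalization and, being built from maxima and
nonnegative sums of linear functionals, is sublinear. Under `B̄ = B L` the unnormalized posterior
for `ȳ` under `B̄` is `∑_y L_{y ȳ}` times the one for `y` under `B`; sublinearity and the row sums
`∑_ȳ L_{y ȳ} = 1` give `∑_ȳ W_k(x̄_ȳ) ≤ ∑_y W_k(x_y)`, whence `W̄_k ≤ W_k` by induction on `k`. -/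

open Matrix

section UnnormalizedValueIteration

variable {S O A : Type*} [Fintype S] [Fintype O] [Fintype A] [Nonempty A]

noncomputable def unnormVI (M : A → O → Matrix S S ℝ) (r : A → S → ℝ) (ρ : ℝ) :
    ℕ → (S → ℝ) → ℝ
  | 0 => fun _ => 0
  | k + 1 => fun x => univ.sup' univ_nonempty fun u =>
      r u ⬝ᵥ x + ρ * ∑ y, unnormVI M r ρ k (M u y *ᵥ x)

variable {M : A → O → Matrix S S ℝ} {r : A → S → ℝ} {ρ : ℝ}

theorem le_unnormVI_succ (k : ℕ) (x : S → ℝ) (u : A) :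
    r u ⬝ᵥ x + ρ * ∑ y, unnormVI M r ρ k (M u y *ᵥ x) ≤ unnormVI M r ρ (k + 1) x :=
  le_sup' (fun v => r v ⬝ᵥ x + ρ * ∑ y, unnormVI M r ρ k (M v y *ᵥ x)) (mem_univ u)

theorem unnormVI_smul (k : ℕ) {c : ℝ} (hc : 0 ≤ c) (x : S → ℝ) :
    unnormVI M r ρ k (c • x) = c * unnormVI M r ρ k x := by
  induction k generalizing x with
  | zero => simp [unnormVI]
  | succ k ih =>
    simp only [unnormVI, mulVec_smul, ih, dotProduct_smul, smul_eq_mul, mul₀_sup' hc]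
    refine sup'_congr _ rfl fun u _ => ?_
    rw [← mul_sum]
    ring

theorem unnormVI_add_le (hρ : 0 ≤ ρ) (k : ℕ) (x x' : S → ℝ) :
    unnormVI M r ρ k (x + x') ≤ unnormVI M r ρ k x + unnormVI M r ρ k x' := by
  induction k generalizing x x' with
  | zero => simp [unnormVI]
  | succ k ih =>
    refine sup'_le univ_nonempty _ fun u _ => ?_
    have hsum : ∑ y, unnormVI M r ρ k (M u y *ᵥ (x + x'))
        ≤ ∑ y, unnormVI M r ρ k (M u y *ᵥ x) + ∑ y, unnormVI M r ρ k (M u y *ᵥ x') := by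
      rw [← sum_add_distrib]
      exact sum_le_sum fun y _ => by rw [mulVec_add]; exact ih _ _
    calc r u ⬝ᵥ (x + x') + ρ * ∑ y, unnormVI M r ρ k (M u y *ᵥ (x + x'))
        ≤ (r u ⬝ᵥ x + ρ * ∑ y, unnormVI M r ρ k (M u y *ᵥ x))
          + (r u ⬝ᵥ x' + ρ * ∑ y, unnormVI M r ρ k (M u y *ᵥ x')) := by
          rw [dotProduct_add]
          linarith [mul_le_mul_of_nonneg_left hsum hρ]
      _ ≤ unnormVI M r ρ (k + 1) x + unnormVI M r ρ (k + 1) x' :=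
          add_le_add (le_unnormVI_succ k x u) (le_unnormVI_succ k x' u)

theorem unnormVI_sum_smul_le {ι : Type*} (hρ : 0 ≤ ρ) (k : ℕ) (s : Finset ι) {c : ι → ℝ}
    (hc : ∀ i, 0 ≤ c i) (x : ι → S → ℝ) :
    unnormVI M r ρ k (∑ i ∈ s, c i • x i) ≤ ∑ i ∈ s, c i * unnormVI M r ρ k (x i) := by
  have hzero : unnormVI M r ρ k 0 = 0 := by
    simpa using unnormVI_smul (M := M) (r := r) (ρ := ρ) k le_rfl (0 : S → ℝ)
  calc unnormVI M r ρ k (∑ i ∈ s, c i • x i)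
      ≤ ∑ i ∈ s, unnormVI M r ρ k (c i • x i) :=
        le_sum_of_subadditive _ hzero.le (unnormVI_add_le hρ k) s _
    _ = ∑ i ∈ s, c i * unnormVI M r ρ k (x i) :=
        sum_congr rfl fun i _ => unnormVI_smul k (hc i) (x i)

theorem unnormVI_le_of_garbling (hρ : 0 ≤ ρ) {Mb : A → O → Matrix S S ℝ} (L : A → O → O → ℝ)
    (hL : ∀ u y' y, 0 ≤ L u y' y) (hL_sum : ∀ u y', ∑ y, L u y' y = 1)
    (hMb : ∀ u y, Mb u y = ∑ y', L u y' y • M u y') (k : ℕ) (x : S → ℝ) :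
    unnormVI Mb r ρ k x ≤ unnormVI M r ρ k x := by
  induction k generalizing x with
  | zero => exact le_rfl
  | succ k ih =>
    refine sup'_le univ_nonempty _ fun u _ => le_trans ?_ (le_unnormVI_succ k x u)
    gcongr r u ⬝ᵥ x + ρ * ?_
    calc ∑ y, unnormVI Mb r ρ k (Mb u y *ᵥ x)
        ≤ ∑ y, unnormVI M r ρ k (Mb u y *ᵥ x) := sum_le_sum fun y _ => ih _
      _ ≤ ∑ y, ∑ y', L u y' y * unnormVI M r ρ k (M u y' *ᵥ x) := by
          gcongr with y
          simp only [hMb, sum_mulVec, smul_mulVec]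
          exact unnormVI_sum_smul_le hρ k _ (hL u · y) _
      _ = ∑ y', unnormVI M r ρ k (M u y' *ᵥ x) := by
          rw [sum_comm]
          simp only [← sum_mul, hL_sum, one_mul]

end UnnormalizedValueIteration

section BayesFilter

variable {X Y : ℕ} {B : Matrix (Fin X) (Fin Y) ℝ} {P : Matrix (Fin X) (Fin X) ℝ}
  {π : Fin X → ℝ}

/-- The matrix `diag(B_{·y}) Pᵀ`. -/
def filterMatrix (B : Matrix (Fin X) (Fin Y) ℝ) (P : Matrix (Fin X) (Fin X) ℝ) (y : Fin Y) :
    Matrix (Fin X) (Fin X) ℝ :=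
  Matrix.of fun j i => B j y * P i j

theorem filterMatrix_mulVec (y : Fin Y) :
    filterMatrix B P y *ᵥ π = fun j => B j y * bayesPred P π j := by
  ext j
  simp only [filterMatrix, mulVec, dotProduct, of_apply, bayesPred, mul_sum, mul_assoc]

theorem filterMatrix_mul (L : Matrix (Fin Y) (Fin Y) ℝ) (y : Fin Y) :
    filterMatrix (B * L) P y = ∑ y', L y' y • filterMatrix B P y' := by
  ext j i
  simp only [filterMatrix, of_apply, mul_apply, Matrix.sum_apply, Matrix.smul_apply, smul_eq_mul,
    sum_mul]
  exact sum_congr rfl fun y' _ => by ring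

variable (hB : ∀ j y, 0 ≤ B j y) (hP : ∀ i j, 0 ≤ P i j) (hπ : ∀ i, 0 ≤ π i)
include hB hP hπ

theorem mul_bayesPred_nonneg (y : Fin Y) (j : Fin X) : 0 ≤ B j y * bayesPred P π j :=
  mul_nonneg (hB j y) (sum_nonneg fun i _ => mul_nonneg (hP i j) (hπ i))

theorem obsMarg_nonneg (y : Fin Y) : 0 ≤ obsMarg B P π y :=
  sum_nonneg fun j _ => mul_bayesPred_nonneg hB hP hπ y j

theorem filterMatrix_mulVec_eq_smul_bayesT (y : Fin Y) :
    filterMatrix B P y *ᵥ π = obsMarg B P π y • bayesT B P π y := by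
  rw [filterMatrix_mulVec]
  ext j
  simp only [Pi.smul_apply, smul_eq_mul, bayesT]
  rcases eq_or_ne (obsMarg B P π y) 0 with h | h
  · rw [h, zero_mul]
    exact (sum_eq_zero_iff_of_nonneg fun j _ => mul_bayesPred_nonneg hB hP hπ y j).1 h j
      (mem_univ j)
  · field_simp

theorem bayesT_inSimplex (y : Fin Y) (h : obsMarg B P π y ≠ 0) :
    inSimplex (bayesT B P π y) :=
  ⟨fun j => div_nonneg (mul_bayesPred_nonneg hB hP hπ y j) (obsMarg_nonneg hB hP hπ y),
    by simp only [bayesT, ← sum_div]; exact div_self h⟩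

end BayesFilter

theorem VI_eq_unnormVI {X Y U : ℕ} [NeZero U] {P : Fin U → Matrix (Fin X) (Fin X) ℝ}
    {B : Fin U → Matrix (Fin X) (Fin Y) ℝ} (r : Fin U → Fin X → ℝ) (ρ : ℝ)
    (hP : ∀ u i j, 0 ≤ P u i j) (hB : ∀ u j y, 0 ≤ B u j y) (k : ℕ) {π : Fin X → ℝ}
    (hπ : inSimplex π) :
    VI P B r ρ k π = unnormVI (fun u => filterMatrix (B u) (P u)) r ρ k π := by
  induction k generalizing π with
  | zero => rfl
  | succ k ih =>
    refine sup'_congr univ_nonempty rfl fun u _ => ?_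
    congr 2
    refine sum_congr rfl fun y _ => ?_
    rw [filterMatrix_mulVec_eq_smul_bayesT (hB u) (hP u) hπ.1,
      unnormVI_smul k (obsMarg_nonneg (hB u) (hP u) hπ.1 y), mul_comm]
    rcases eq_or_ne (obsMarg (B u) (P u) π y) 0 with h | h
    · simp only [h, zero_mul]
    · rw [ih (bayesT_inSimplex (hB u) (hP u) hπ.1 y h)]

theorem blackwell_value_comparison_general
    (X Y U : ℕ) [NeZero U]
    (P : Fin U → Matrix (Fin X) (Fin X) ℝ) (hPrs : ∀ u, rowStochastic (P u))
    (B Bb : Fin U → Matrix (Fin X) (Fin Y) ℝ)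
    (hBrs : ∀ u, rowStochastic (B u)) (hBbrs : ∀ u, rowStochastic (Bb u))
    (r : Fin U → Fin X → ℝ) (ρ : ℝ) (hρ0 : 0 ≤ ρ)
    (hBlackwell : ∀ u, ∃ L : Matrix (Fin Y) (Fin Y) ℝ, rowStochastic L ∧ Bb u = B u * L) :
    ∀ k : ℕ, ∀ π : Fin X → ℝ, inSimplex π →
      VI P Bb r ρ k π ≤ VI P B r ρ k π := by
  intro k π hπ
  choose L hL hBL using hBlackwell
  have hP u := (hPrs u).1
  rw [VI_eq_unnormVI r ρ hP (fun u => (hBbrs u).1) k hπ,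
    VI_eq_unnormVI r ρ hP (fun u => (hBrs u).1) k hπ]
  exact unnormVI_le_of_garbling hρ0 L (fun u => (hL u).1) (fun u => (hL u).2)
    (fun u y => by rw [hBL u, filterMatrix_mul]) k π

/-- Theorem 3 (statement 2), finite-horizon: comparing two POMDPs with the same transition
matrices `P(u)`, rewards and discount, where `B(u)` Blackwell-dominates `B̄(u)`
(`B̄(u) = B(u) · L_u` with `L_u` row-stochastic) for every `u`; then `V_k^θ̄ ≤ V_k^θ`. -/
theorem blackwell_value_comparison
    (X Y U : ℕ) [NeZero U]
    (P : Fin U → Matrix (Fin X) (Fin X) ℝ) (hPrs : ∀ u, rowStochastic (P u))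
    (B Bb : Fin U → Matrix (Fin X) (Fin Y) ℝ)
    (hBrs : ∀ u, rowStochastic (B u)) (hBbrs : ∀ u, rowStochastic (Bb u))
    (hBpos : ∀ u i y, 0 < B u i y) (hBbpos : ∀ u i y, 0 < Bb u i y)
    (r : Fin U → Fin X → ℝ) (ρ : ℝ) (hρ0 : 0 ≤ ρ) (hρ1 : ρ < 1)
    (hBlackwell : ∀ u, ∃ L : Matrix (Fin Y) (Fin Y) ℝ, rowStochastic L ∧ Bb u = B u * L) :
    ∀ k : ℕ, ∀ π : Fin X → ℝ, inSimplex π →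
      VI P Bb r ρ k π ≤ VI P B r ρ k π :=
  blackwell_value_comparison_general X Y U P hPrs B Bb hBrs hBbrs r ρ hρ0 hBlackwell
end

section
/- Monotone value function (Theorem 4, statement 1, monotonicity part; Lovejoy): Consider a finite POMDP with row-stochastic transition matrices P(u), row-stochastic observation matrices B(u) with strictly positive entries, reward vectors r_u, and discount ρ ∈ [0,1). Assume: (A1) each r_u has nondecreasing components; (A2) each P(u) is TP2; (A3) each B(u) is TP2. Then every value-iteration value function V_k is monotone nondecreasing with respect to the monotone likelihood ratio (MLR) order on the belief simplex: if π₁, π₂ ∈ Π(X) and π₁ ≤_r π₂, then V_k(π₁) ≤ V_k(π₂). -/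
open Finset

/-!
Lovejoy's argument by induction on the horizon. Suppose `V_k` is MLR-monotone and fix an action.
The reward term `r_uᵀπ` is MLR-monotone because MLR dominance implies first-order stochastic
dominance and `r_u` is nondecreasing. For the continuation term, TP2 of `P` makes the prediction
`Pᵀπ` MLR-monotone in `π`, and TP2 of `B` makes the posterior `T(π, y)` MLR-monotone both in `π`
and in the observation `y`. Hence `V_k(T(π₁, y)) ≤ V_k(T(π₂, y))`, and `y ↦ V_k(T(π₂, y))` is
nondecreasing; writing `Σ_y g(y) σ(π, y) = Σ_j (Σ_y g(y) B_{j,y}) (Pᵀπ)_j`, the inner sums are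
nondecreasing in `j` (the rows of a TP2 `B` are MLR-ordered), so the expectation increases along
the MLR-ordered predictions. Taking the maximum over actions preserves monotonicity.
-/

def MLRMonotone {X : ℕ} (V : (Fin X → ℝ) → ℝ) : Prop :=
  ∀ π₁ π₂ : Fin X → ℝ, inSimplex π₁ → inSimplex π₂ → MLRle π₁ π₂ → V π₁ ≤ V π₂

namespace MLRle

variable {n : ℕ}

theorem refl (a : Fin n → ℝ) : MLRle a a := fun _ _ _ => (mul_comm _ _).le

theorem mul {a b c d : Fin n → ℝ} (ha : ∀ i, 0 ≤ a i) (hb : ∀ i, 0 ≤ b i)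
    (hc : ∀ i, 0 ≤ c i) (hd : ∀ i, 0 ≤ d i) (hab : MLRle a b) (hcd : MLRle c d) :
    MLRle (a * c) (b * d) := by
  intro i j hij
  calc a j * c j * (b i * d i) = (a j * b i) * (c j * d i) := by ring
    _ ≤ (a i * b j) * (c i * d j) :=
      mul_le_mul (hab i j hij) (hcd i j hij) (mul_nonneg (hc j) (hd i)) (mul_nonneg (ha i) (hb j))
    _ = a i * c i * (b j * d j) := by ring

theorem div_const {a b : Fin n → ℝ} {s t : ℝ} (hab : MLRle a b) (hs : 0 ≤ s) (ht : 0 ≤ t) :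
    MLRle (fun i => a i / s) (fun i => b i / t) := by
  intro i j hij
  rw [div_mul_div_comm, div_mul_div_comm]
  exact div_le_div_of_nonneg_right (hab i j hij) (mul_nonneg hs ht)

/-- Pairing the `(i, j)` and `(j, i)` terms turns the sum into one of
`(a i * b j - a j * b i) * f i j`, each nonnegative. -/
theorem sum_sum_mul_nonneg {a b : Fin n → ℝ} (hab : MLRle a b) {f : Fin n → Fin n → ℝ}
    (hf_swap : ∀ i j, f j i = -f i j) (hf : ∀ i j, i < j → 0 ≤ f i j) :
    0 ≤ ∑ i, ∑ j, a i * b j * f i j := by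
  have hswap : ∑ i, ∑ j, a i * b j * f i j = -∑ i, ∑ j, a j * b i * f i j := by
    rw [sum_comm, ← sum_neg_distrib]
    refine sum_congr rfl fun i _ => ?_
    rw [← sum_neg_distrib]
    exact sum_congr rfl fun j _ => by rw [hf_swap j i]; ring
  have hpair : 0 ≤ ∑ i, ∑ j, (a i * b j - a j * b i) * f i j := by
    refine sum_nonneg fun i _ => sum_nonneg fun j _ => ?_
    rcases lt_trichotomy i j with h | rfl | h
    · exact mul_nonneg (sub_nonneg.2 (hab i j h)) (hf i j h)
    · simp
    · rw [hf_swap j i]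
      exact mul_nonneg_of_nonpos_of_nonpos (sub_nonpos.2 (hab j i h)) (neg_nonpos.2 (hf j i h))
  have hsplit : ∑ i, ∑ j, (a i * b j - a j * b i) * f i j
      = ∑ i, ∑ j, a i * b j * f i j - ∑ i, ∑ j, a j * b i * f i j := by
    simp only [sub_mul, sum_sub_distrib]
  linarith

/-- MLR dominance implies first-order stochastic dominance. -/
theorem sum_mul_le_sum_mul {a b g : Fin n → ℝ} (hab : MLRle a b) (ha : ∑ i, a i = 1)
    (hb : ∑ i, b i = 1) (hg : Monotone g) : ∑ i, g i * a i ≤ ∑ i, g i * b i := by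
  have h := hab.sum_sum_mul_nonneg (f := fun i j => g j - g i) (fun _ _ => by ring)
    fun i j hij => sub_nonneg.2 (hg hij.le)
  have hexpand : ∑ i, ∑ j, a i * b j * (g j - g i)
      = (∑ i, a i) * ∑ j, g j * b j - (∑ j, b j) * ∑ i, g i * a i := by
    simp only [mul_sub, sum_sub_distrib, sum_mul_sum]
    congr 1
    · exact sum_congr rfl fun i _ => sum_congr rfl fun j _ => by ring
    · rw [sum_comm]
      exact sum_congr rfl fun i _ => sum_congr rfl fun j _ => by ring
  rw [hexpand, ha, hb] at h
  linarith

end MLRle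

section TP2

variable {n m : ℕ} {A : Matrix (Fin n) (Fin m) ℝ}

theorem TP2.MLRle_row (hA : TP2 A) {i i' : Fin n} (h : i ≤ i') : MLRle (A i) (A i') := by
  rcases h.lt_or_eq with h | rfl
  · exact fun y y' hy => hA i i' y y' h hy
  · exact MLRle.refl _

theorem TP2.MLRle_col (hA : TP2 A) {y y' : Fin m} (h : y ≤ y') :
    MLRle (fun i => A i y) (fun i => A i y') := by
  rcases h.lt_or_eq with h | rfl
  · exact fun i j hij => (mul_comm _ _).trans_le (hA i j y y' hij h)
  · exact MLRle.refl _

theorem TP2.MLRle_bayesPred {P : Matrix (Fin n) (Fin n) ℝ} (hP : TP2 P) {π₁ π₂ : Fin n → ℝ}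
    (hπ : MLRle π₁ π₂) : MLRle (bayesPred P π₁) (bayesPred P π₂) := by
  intro i j hij
  have h := hπ.sum_sum_mul_nonneg (f := fun m k => P m i * P k j - P m j * P k i)
    (fun _ _ => by ring) fun m k hmk => sub_nonneg.2 (hP m k i j hmk hij)
  have hexpand : ∑ m, ∑ k, π₁ m * π₂ k * (P m i * P k j - P m j * P k i)
      = bayesPred P π₁ i * bayesPred P π₂ j
        - bayesPred P π₁ j * bayesPred P π₂ i := by
    simp only [bayesPred, sum_mul_sum, ← sum_sub_distrib]
    exact sum_congr rfl fun m _ => sum_congr rfl fun k _ => by ring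
  linarith

end TP2

section Bayes

variable {X Y : ℕ} {B : Matrix (Fin X) (Fin Y) ℝ} {P : Matrix (Fin X) (Fin X) ℝ}

theorem inSimplex_bayesPred (hP : rowStochastic P) {π : Fin X → ℝ} (hπ : inSimplex π) :
    inSimplex (bayesPred P π) := by
  refine ⟨fun j => sum_nonneg fun i _ => mul_nonneg (hP.1 i j) (hπ.1 i), ?_⟩
  calc ∑ j, bayesPred P π j = ∑ i, (∑ j, P i j) * π i := by
        simp only [bayesPred, sum_mul]
        exact sum_comm
    _ = 1 := by simp only [hP.2, one_mul, hπ.2]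

theorem obsMarg_pos (hB : ∀ i y, 0 < B i y) (hP : rowStochastic P) {π : Fin X → ℝ}
    (hπ : inSimplex π) (y : Fin Y) : 0 < obsMarg B P π y := by
  have hq := inSimplex_bayesPred hP hπ
  obtain ⟨j, -, hj⟩ : ∃ j ∈ univ, 0 < bayesPred P π j := by
    by_contra! h
    have := sum_eq_zero fun j hj => le_antisymm (h j hj) (hq.1 j)
    linarith [hq.2]
  exact sum_pos' (fun k _ => mul_nonneg (hB k y).le (hq.1 k)) ⟨j, mem_univ j, mul_pos (hB j y) hj⟩

theorem inSimplex_bayesT (hB : ∀ i y, 0 < B i y) (hP : rowStochastic P) {π : Fin X → ℝ}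
    (hπ : inSimplex π) (y : Fin Y) : inSimplex (bayesT B P π y) := by
  have hσ := obsMarg_pos hB hP hπ y
  refine ⟨fun j => div_nonneg (mul_nonneg (hB j y).le ((inSimplex_bayesPred hP hπ).1 j)) hσ.le, ?_⟩
  simp only [bayesT]
  rw [← sum_div]
  exact div_self hσ.ne'

theorem MLRle_bayesT (hB : ∀ i y, 0 ≤ B i y) (hP : rowStochastic P) {π₁ π₂ : Fin X → ℝ}
    (h₁ : inSimplex π₁) (h₂ : inSimplex π₂) {y y' : Fin Y}
    (hy : MLRle (fun i => B i y) (fun i => B i y'))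
    (hπ : MLRle (bayesPred P π₁) (bayesPred P π₂)) :
    MLRle (bayesT B P π₁ y) (bayesT B P π₂ y') := by
  have hq₁ := (inSimplex_bayesPred hP h₁).1
  have hq₂ := (inSimplex_bayesPred hP h₂).1
  exact (hy.mul (fun i => hB i y) (fun i => hB i y') hq₁ hq₂ hπ).div_const
    (sum_nonneg fun j _ => mul_nonneg (hB j y) (hq₁ j))
    (sum_nonneg fun j _ => mul_nonneg (hB j y') (hq₂ j))

theorem sum_mul_obsMarg (g : Fin Y → ℝ) (π : Fin X → ℝ) :
    ∑ y, g y * obsMarg B P π y = ∑ j, (∑ y, g y * B j y) * bayesPred P π j := by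
  simp only [obsMarg, mul_sum, sum_mul]
  rw [sum_comm]
  exact sum_congr rfl fun j _ => sum_congr rfl fun y _ => by ring

theorem sum_mul_obsMarg_le (hB : rowStochastic B) (hBtp : TP2 B) (hP : rowStochastic P)
    (hPtp : TP2 P) {π₁ π₂ : Fin X → ℝ} (h₁ : inSimplex π₁) (h₂ : inSimplex π₂)
    (hπ : MLRle π₁ π₂) {g : Fin Y → ℝ} (hg : Monotone g) :
    ∑ y, g y * obsMarg B P π₁ y ≤ ∑ y, g y * obsMarg B P π₂ y := by
  rw [sum_mul_obsMarg, sum_mul_obsMarg]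
  exact (hPtp.MLRle_bayesPred hπ).sum_mul_le_sum_mul (inSimplex_bayesPred hP h₁).2
    (inSimplex_bayesPred hP h₂).2
    fun j j' hj => (hBtp.MLRle_row hj).sum_mul_le_sum_mul (hB.2 j) (hB.2 j') hg

theorem sum_value_mul_obsMarg_le {V : (Fin X → ℝ) → ℝ} (hV : MLRMonotone V)
    (hB : rowStochastic B) (hBpos : ∀ i y, 0 < B i y) (hBtp : TP2 B) (hP : rowStochastic P)
    (hPtp : TP2 P) {π₁ π₂ : Fin X → ℝ} (h₁ : inSimplex π₁) (h₂ : inSimplex π₂)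
    (hπ : MLRle π₁ π₂) :
    ∑ y, V (bayesT B P π₁ y) * obsMarg B P π₁ y ≤ ∑ y, V (bayesT B P π₂ y) * obsMarg B P π₂ y := by
  have hT : ∀ y, inSimplex (bayesT B P π₂ y) := inSimplex_bayesT hBpos hP h₂
  calc ∑ y, V (bayesT B P π₁ y) * obsMarg B P π₁ y
      ≤ ∑ y, V (bayesT B P π₂ y) * obsMarg B P π₁ y :=
        sum_le_sum fun y _ => mul_le_mul_of_nonneg_right
          (hV _ _ (inSimplex_bayesT hBpos hP h₁ y) (hT y)
            (MLRle_bayesT hB.1 hP h₁ h₂ (MLRle.refl _) (hPtp.MLRle_bayesPred hπ)))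
          (obsMarg_pos hBpos hP h₁ y).le
    _ ≤ ∑ y, V (bayesT B P π₂ y) * obsMarg B P π₂ y :=
        sum_mul_obsMarg_le hB hBtp hP hPtp h₁ h₂ hπ fun y y' hy =>
          hV _ _ (hT y) (hT y') (MLRle_bayesT hB.1 hP h₂ h₂ (hBtp.MLRle_col hy) (MLRle.refl _))

end Bayes

theorem MLRMonotone.Qfun {X Y U : ℕ} [NeZero U] {P : Fin U → Matrix (Fin X) (Fin X) ℝ}
    {B : Fin U → Matrix (Fin X) (Fin Y) ℝ} {r : Fin U → Fin X → ℝ} {ρ : ℝ} {k : ℕ} {u : Fin U}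
    (hV : MLRMonotone (VI P B r ρ k)) (hP : rowStochastic (P u)) (hB : rowStochastic (B u))
    (hBpos : ∀ i y, 0 < B u i y) (hρ : 0 ≤ ρ) (hr : Monotone (r u)) (hPtp : TP2 (P u))
    (hBtp : TP2 (B u)) : MLRMonotone fun π => Qfun P B r ρ k π u := fun _ _ h₁ h₂ hπ =>
  add_le_add (hπ.sum_mul_le_sum_mul h₁.2 h₂.2 hr) <| mul_le_mul_of_nonneg_left
    (sum_value_mul_obsMarg_le hV hB hBpos hBtp hP hPtp h₁ h₂ hπ) hρ

theorem value_function_MLR_monotone_general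
    (X Y U : ℕ) [NeZero U]
    (P : Fin U → Matrix (Fin X) (Fin X) ℝ) (hPrs : ∀ u, rowStochastic (P u))
    (B : Fin U → Matrix (Fin X) (Fin Y) ℝ) (hBrs : ∀ u, rowStochastic (B u))
    (hBpos : ∀ u i y, 0 < B u i y)
    (r : Fin U → Fin X → ℝ) (ρ : ℝ) (hρ0 : 0 ≤ ρ)
    (hA1 : ∀ u, Monotone (r u))
    (hA2 : ∀ u, TP2 (P u))
    (hA3 : ∀ u, TP2 (B u)) :
    ∀ k : ℕ, ∀ π₁ π₂ : Fin X → ℝ, inSimplex π₁ → inSimplex π₂ →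
      MLRle π₁ π₂ → VI P B r ρ k π₁ ≤ VI P B r ρ k π₂ := by
  intro k
  induction k with
  | zero => exact fun _ _ _ _ _ => le_rfl
  | succ k ih =>
    intro π₁ π₂ h₁ h₂ hπ
    refine sup'_mono_fun (hs := univ_nonempty) fun u _ => ?_
    exact MLRMonotone.Qfun ih (hPrs u) (hBrs u) (hBpos u) hρ0 (hA1 u) (hA2 u) (hA3 u) π₁ π₂ h₁ h₂ hπ

/-- Theorem 4 (statement 1, monotonicity part; Lovejoy): under A1 (monotone rewards),
A2 (TP2 transitions) and A3 (TP2 observations), every value-iteration value function `V_k`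
is nondecreasing with respect to the MLR order on the belief simplex. -/
theorem value_function_MLR_monotone
    (X Y U : ℕ) [NeZero U]
    (P : Fin U → Matrix (Fin X) (Fin X) ℝ) (hPrs : ∀ u, rowStochastic (P u))
    (B : Fin U → Matrix (Fin X) (Fin Y) ℝ) (hBrs : ∀ u, rowStochastic (B u))
    (hBpos : ∀ u i y, 0 < B u i y)
    (r : Fin U → Fin X → ℝ) (ρ : ℝ) (hρ0 : 0 ≤ ρ) (hρ1 : ρ < 1)
    (hA1 : ∀ u, Monotone (r u))
    (hA2 : ∀ u, TP2 (P u))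
    (hA3 : ∀ u, TP2 (B u)) :
    ∀ k : ℕ, ∀ π₁ π₂ : Fin X → ℝ, inSimplex π₁ → inSimplex π₂ →
      MLRle π₁ π₂ → VI P B r ρ k π₁ ≤ VI P B r ρ k π₂ :=
  value_function_MLR_monotone_general X Y U P hPrs B hBrs hBpos r ρ hρ0 hA1 hA2 hA3
end

section
/- Wedge decomposition of nonnegative increasing convex piecewise-linear functions (lemma underlying Theorem 4, statement 3): Let g : [0,1] → ℝ be convex, monotone nondecreasing, with g(0) ≥ 0, and piecewise linear, i.e., there exist points 0 = x_0 < x_1 < ... < x_m = 1 such that g is affine on each subinterval [x_{t−1}, x_t]. Then there exist n ∈ ℕ, nonnegative reals α_1,...,α_n, and reals f_1,...,f_n such that g(x) = Σ_{i=1}^{n} max(α_i·x − f_i, 0) for all x ∈ [0,1]. -/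
/-!
Let `0 = a₀` and let `a₁ ≤ ⋯ ≤ aₘ` be the slopes of `g` on the successive pieces (monotonicity
gives `a₁ ≥ 0`, convexity the ordering). Adding the pieces one at a time shows
`g z = g 0 + ∑ₛ (aₛ₊₁ - aₛ) · max (z - xₛ) 0` on `[0, 1]`: each kink contributes exactly the
change of slope there. Every summand is a wedge, and so is the constant `g 0 ≥ 0`.
-/

open Finset

theorem Fin.clamp_eq_mk_of_le {s m : ℕ} (h : s ≤ m) : Fin.clamp s m = ⟨s, Nat.lt_succ_of_le h⟩ :=
  Fin.ext (by simpa using h)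

theorem StrictMono.strictMonoOn_comp_clamp {α : Type*} [Preorder α] {m : ℕ}
    {x : Fin (m + 1) → α} (hx : StrictMono x) :
    StrictMonoOn (fun s => x (Fin.clamp s m)) (Set.Iic m) := fun s hs t ht hst => by
  simp only [Fin.clamp_eq_mk_of_le hs, Fin.clamp_eq_mk_of_le ht]
  exact hx hst

theorem eq_add_slope_mul_sub_of_eq_affine {g : ℝ → ℝ} {a b p q : ℝ} (hpq : p < q)
    (hg : ∀ z ∈ Set.Icc p q, g z = a * z + b) :
    ∀ z ∈ Set.Icc p q, g z = g p + slope g p q * (z - p) := by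
  have hp := hg p ⟨le_rfl, hpq.le⟩
  have hslope : slope g p q = a := by
    rw [slope_def_field, hg q ⟨hpq.le, le_rfl⟩, hp]
    field_simp [sub_ne_zero.2 hpq.ne']
    ring
  intro z hz
  rw [hslope, hg z hz, hp]
  ring

theorem eq_add_sum_mul_max_sub_of_piecewise_affine {g : ℝ → ℝ} {x a : ℕ → ℝ} (hx : Monotone x)
    {n : ℕ} (hg : ∀ s < n, ∀ z ∈ Set.Icc (x s) (x (s + 1)), g z = g (x s) + a (s + 1) * (z - x s)) :
    ∀ z ∈ Set.Icc (x 0) (x n),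
      g z = g (x 0) + a 0 * (z - x 0) + ∑ s ∈ range n, (a (s + 1) - a s) * max (z - x s) 0 := by
  induction n with
  | zero =>
    rintro z ⟨hz₀, hz₁⟩
    obtain rfl : z = x 0 := le_antisymm hz₁ hz₀
    simp
  | succ n ih =>
    have ih := ih fun s hs => hg s (hs.trans n.lt_succ_self)
    rintro z ⟨hz₀, hz₁⟩
    rw [sum_range_succ]
    rcases le_total z (x n) with hzn | hnz
    · rw [ih z ⟨hz₀, hzn⟩, max_eq_right (sub_nonpos.2 hzn)]
      ring
    -- right of `x n` every earlier wedge is affine, and their slopes telescope to `a n - a 0`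
    have hshift : ∑ s ∈ range n, (a (s + 1) - a s) * max (z - x s) 0 =
        ∑ s ∈ range n, (a (s + 1) - a s) * max (x n - x s) 0 + (a n - a 0) * (z - x n) := by
      rw [← sum_range_sub a, sum_mul, ← sum_add_distrib]
      refine sum_congr rfl fun s hs => ?_
      have hsn : x s ≤ x n := hx (mem_range.1 hs).le
      rw [max_eq_left (by linarith), max_eq_left (by linarith)]
      ring
    rw [hg n n.lt_succ_self z ⟨hnz, hz₁⟩, hshift, max_eq_left (sub_nonneg.2 hnz),
      ih (x n) ⟨hx n.zero_le, le_rfl⟩]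
    ring

theorem exists_wedges_eq_const_add_sum {m : ℕ} {c : ℝ} (hc : 0 ≤ c) {β p : Fin m → ℝ}
    (hβ : ∀ i, 0 ≤ β i) :
    ∃ α f : Fin (m + 1) → ℝ, (∀ i, 0 ≤ α i) ∧
      ∀ z, c + ∑ i, β i * max (z - p i) 0 = ∑ i, max (α i * z - f i) 0 := by
  refine ⟨Fin.cons 0 β, Fin.cons (-c) fun i => β i * p i, Fin.cases le_rfl hβ, fun z => ?_⟩
  simp only [Fin.sum_univ_succ, Fin.cons_zero, Fin.cons_succ, zero_mul, zero_sub, neg_neg,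
    max_eq_left hc, mul_max_of_nonneg _ _ (hβ _), mul_zero, mul_sub]

/-- The leading `0` makes the first wedge coefficient `chordSlope g x 1 - chordSlope g x 0` the
first chord slope itself. -/
noncomputable def chordSlope (g : ℝ → ℝ) (x : ℕ → ℝ) : ℕ → ℝ
  | 0 => 0
  | s + 1 => slope g (x s) (x (s + 1))

theorem chordSlope_le_succ {g : ℝ → ℝ} {S : Set ℝ} (hconv : ConvexOn ℝ S g)
    (hmono : MonotoneOn g S) {x : ℕ → ℝ} (hxS : ∀ s, x s ∈ S) {s : ℕ}
    (hx : StrictMonoOn x (Set.Iic (s + 1))) :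
    chordSlope g x s ≤ chordSlope g x (s + 1) := by
  cases s with
  | zero => exact hmono.slope_nonneg (hxS 0) (hxS 1)
  | succ t =>
    simp only [chordSlope, slope_def_field]
    exact hconv.slope_mono_adjacent (hxS t) (hxS (t + 2))
      (hx (Set.mem_Iic.2 (by omega)) (Set.mem_Iic.2 (by omega)) (by omega))
      (hx (Set.mem_Iic.2 (by omega)) (Set.mem_Iic.2 le_rfl) (by omega))

/-- Wedge decomposition of nonnegative increasing convex piecewise-linear functions on [0,1]
(lemma underlying Theorem 4, statement 3): such a function is a finite sum of wedge functions
`x ↦ max(αᵢ x − fᵢ, 0)` with `αᵢ ≥ 0`. -/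
theorem wedge_decomposition
    (g : ℝ → ℝ)
    (hconv : ConvexOn ℝ (Set.Icc (0 : ℝ) 1) g)
    (hmono : MonotoneOn g (Set.Icc (0 : ℝ) 1))
    (h0 : 0 ≤ g 0)
    (m : ℕ) (x : Fin (m + 1) → ℝ) (hxmono : StrictMono x)
    (hx0 : x 0 = 0) (hx1 : x (Fin.last m) = 1)
    (hpl : ∀ t : Fin m, ∃ a b : ℝ,
      ∀ z ∈ Set.Icc (x t.castSucc) (x t.succ), g z = a * z + b) :
    ∃ n : ℕ, ∃ α f : Fin n → ℝ, (∀ i, 0 ≤ α i) ∧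
      ∀ z ∈ Set.Icc (0 : ℝ) 1, g z = ∑ i, max (α i * z - f i) 0 := by
  set y : ℕ → ℝ := fun s => x (Fin.clamp s m)
  have hy_eq (s : ℕ) (hs : s ≤ m) : y s = x ⟨s, Nat.lt_succ_of_le hs⟩ :=
    congrArg x (Fin.clamp_eq_mk_of_le hs)
  have hy_mem (s : ℕ) : y s ∈ Set.Icc (0 : ℝ) 1 :=
    ⟨hx0 ▸ hxmono.monotone (Fin.zero_le _), hx1 ▸ hxmono.monotone (Fin.le_last _)⟩
  have hy_strict : StrictMonoOn y (Set.Iic m) := hxmono.strictMonoOn_comp_clamp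
  have hpiece : ∀ s < m, ∀ z ∈ Set.Icc (y s) (y (s + 1)),
      g z = g (y s) + chordSlope g y (s + 1) * (z - y s) := by
    intro s hs
    obtain ⟨a, b, hab⟩ := hpl ⟨s, hs⟩
    refine eq_add_slope_mul_sub_of_eq_affine (a := a) (b := b)
      (hy_strict hs.le (Set.mem_Iic.2 hs) s.lt_succ_self) ?_
    rw [hy_eq s hs.le, hy_eq (s + 1) hs]
    exact hab
  have hy_mono : Monotone y := hxmono.monotone.comp Fin.clamp_monotone
  have hrepr := eq_add_sum_mul_max_sub_of_piecewise_affine hy_mono hpiece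
  obtain ⟨α, f, hα, hwedges⟩ := exists_wedges_eq_const_add_sum h0
    (β := fun i : Fin m => chordSlope g y (i + 1) - chordSlope g y i) (p := fun i => y i)
    fun i => sub_nonneg.2 <| chordSlope_le_succ hconv hmono hy_mem <|
      hy_strict.mono (Set.Iic_subset_Iic.2 i.isLt)
  have hy0 : y 0 = 0 := hy_eq 0 m.zero_le ▸ hx0
  have hym : y m = 1 := hy_eq m le_rfl ▸ hx1
  refine ⟨m + 1, α, f, hα, fun z hz => ?_⟩
  rw [← hwedges, Fin.sum_univ_eq_sum_range
      fun s => (chordSlope g y (s + 1) - chordSlope g y s) * max (z - y s) 0,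
    hrepr z (hy0 ▸ hym ▸ hz), hy0, chordSlope, zero_mul, add_zero]
end

section
/- TP2 matrices preserve the MLR order (Bayes-prediction monotonicity lemma used throughout): Let P be an X×X matrix with nonnegative entries that is TP2 (all 2×2 minors nonnegative), and let π₁, π₂ ∈ ℝ^X be vectors with nonnegative entries such that π₁ ≤_r π₂. Then Pᵀπ₁ ≤_r Pᵀπ₂, i.e., for all 1 ≤ i < j ≤ X: (Pᵀπ₁)_i (Pᵀπ₂)_j ≥ (Pᵀπ₁)_j (Pᵀπ₂)_i. Consequently, for any nonnegative diagonal scaling (such as a Bayes update with a fixed observation likelihood column b ∈ ℝ^X_{≥0}), the vectors with components b_m(Pᵀπ₁)_m and b_m(Pᵀπ₂)_m are also MLR ordered. -/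
/-! Pairing the `(k, l)` and `(l, k)` terms of the product `(π₁ᵀP)_i (π₂ᵀP)_j - (π₁ᵀP)_j (π₂ᵀP)_i`
turns it into half a sum of products of a 2×2 minor of `(π₁, π₂)` with a 2×2 minor of `P`
(Cauchy–Binet). Under `π₁ ≤_r π₂` and TP2 both minors have the sign of `l - k`, so every
product is nonnegative. -/

open Finset

open Matrix

section MLR

variable {n m : ℕ}

theorem two_mul_vecMul_minor_eq_sum (π₁ π₂ : Fin n → ℝ) (P : Matrix (Fin n) (Fin m) ℝ)
    (i j : Fin m) :
    2 * ((π₁ ᵥ* P) i * (π₂ ᵥ* P) j - (π₁ ᵥ* P) j * (π₂ ᵥ* P) i) =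
      ∑ k, ∑ l, (π₁ k * π₂ l - π₁ l * π₂ k) * (P k i * P l j - P k j * P l i) := by
  have hswap : ∑ k, ∑ l, π₁ l * π₂ k * (P k i * P l j - P k j * P l i) =
      -∑ k, ∑ l, π₁ k * π₂ l * (P k i * P l j - P k j * P l i) := by
    rw [sum_comm, ← sum_neg_distrib]
    exact sum_congr rfl fun k _ => by
      rw [← sum_neg_distrib]; exact sum_congr rfl fun l _ => by ring
  have hexpand : (π₁ ᵥ* P) i * (π₂ ᵥ* P) j - (π₁ ᵥ* P) j * (π₂ ᵥ* P) i =
      ∑ k, ∑ l, π₁ k * π₂ l * (P k i * P l j - P k j * P l i) := by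
    simp only [vecMul, dotProduct, sum_mul_sum, ← sum_sub_distrib]
    exact sum_congr rfl fun k _ => sum_congr rfl fun l _ => by ring
  simp only [sub_mul, sum_sub_distrib, hswap, hexpand]
  ring

theorem minor_mul_minor_nonneg {π₁ π₂ : Fin n → ℝ} {P : Matrix (Fin n) (Fin m) ℝ}
    (hπ : MLRle π₁ π₂) (hP : TP2 P) {i j : Fin m} (hij : i < j) (k l : Fin n) :
    0 ≤ (π₁ k * π₂ l - π₁ l * π₂ k) * (P k i * P l j - P k j * P l i) := by
  rcases lt_trichotomy k l with hkl | rfl | hlk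
  · exact mul_nonneg (sub_nonneg.2 (hπ k l hkl)) (sub_nonneg.2 (hP k l i j hkl hij))
  · simp
  · exact mul_nonneg_of_nonpos_of_nonpos
      (by linarith [hπ l k hlk]) (by linarith [hP l k i j hlk hij])

theorem MLRle.vecMul {π₁ π₂ : Fin n → ℝ} {P : Matrix (Fin n) (Fin m) ℝ}
    (hπ : MLRle π₁ π₂) (hP : TP2 P) : MLRle (π₁ ᵥ* P) (π₂ ᵥ* P) := by
  intro i j hij
  have hsum := two_mul_vecMul_minor_eq_sum π₁ π₂ P i j
  have hnonneg : 0 ≤ ∑ k, ∑ l, (π₁ k * π₂ l - π₁ l * π₂ k) * (P k i * P l j - P k j * P l i) :=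
    sum_nonneg fun k _ => sum_nonneg fun l _ => minor_mul_minor_nonneg hπ hP hij k l
  linarith

theorem MLRle.mul_left {a c b : Fin n → ℝ} (h : MLRle a c) (hb : ∀ i, 0 ≤ b i) :
    MLRle (fun i => b i * a i) (fun i => b i * c i) := by
  intro i j hij
  calc b j * a j * (b i * c i) = (b i * b j) * (a j * c i) := by ring
    _ ≤ (b i * b j) * (a i * c j) := mul_le_mul_of_nonneg_left (h i j hij) (mul_nonneg (hb i) (hb j))
    _ = b i * a i * (b j * c j) := by ring

end MLR

theorem bayesPred_eq_vecMul {X : ℕ} (P : Matrix (Fin X) (Fin X) ℝ) (π : Fin X → ℝ) :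
    bayesPred P π = π ᵥ* P := by
  ext j
  simp only [bayesPred, vecMul, dotProduct, mul_comm]

theorem tp2_preserves_mlr_general
    (X : ℕ)
    (P : Matrix (Fin X) (Fin X) ℝ)
    (hPTP2 : TP2 P)
    (π₁ π₂ : Fin X → ℝ)
    (hmlr : MLRle π₁ π₂) :
    MLRle (bayesPred P π₁) (bayesPred P π₂) ∧
    ∀ b : Fin X → ℝ, (∀ m, 0 ≤ b m) →
      MLRle (fun m => b m * bayesPred P π₁ m) (fun m => b m * bayesPred P π₂ m) := by
  have hpred : MLRle (bayesPred P π₁) (bayesPred P π₂) := by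
    simpa only [bayesPred_eq_vecMul] using hmlr.vecMul hPTP2
  exact ⟨hpred, fun _ hb => hpred.mul_left hb⟩

/-- TP2 matrices preserve the MLR order, and so does any nonnegative diagonal scaling
(Bayes-prediction monotonicity lemma): if `P` is TP2 with nonnegative entries and
`π₁ ≤_r π₂` (both with nonnegative entries), then `Pᵀπ₁ ≤_r Pᵀπ₂`, and for every
nonnegative likelihood column `b`, `(b ⊙ Pᵀπ₁) ≤_r (b ⊙ Pᵀπ₂)`. -/
theorem tp2_preserves_mlr
    (X : ℕ)
    (P : Matrix (Fin X) (Fin X) ℝ)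
    (hPnonneg : ∀ i j, 0 ≤ P i j) (hPTP2 : TP2 P)
    (π₁ π₂ : Fin X → ℝ) (h₁ : ∀ i, 0 ≤ π₁ i) (h₂ : ∀ i, 0 ≤ π₂ i)
    (hmlr : MLRle π₁ π₂) :
    MLRle (bayesPred P π₁) (bayesPred P π₂) ∧
    ∀ b : Fin X → ℝ, (∀ m, 0 ≤ b m) →
      MLRle (fun m => b m * bayesPred P π₁ m) (fun m => b m * bayesPred P π₂ m) :=
  tp2_preserves_mlr_general X P hPTP2 π₁ π₂ hmlr
end
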